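/- arXiv:1002.0364 — 4 statements merged into one kernel-verified Lean document; each statement's English description precedes it below -/
import Mathlib

section
/- Let f be a homeomorphism of the torus T^2 isotopic to the identity whose rotation set is a single vector (α, β) with 1, α, β rationally independent. If X ⊆ T^2 is a connected set that lifts to a bounded connected subset of R^2, then f^n(X) ≠ X for all integers n ≠ 0. -/
open Filter Topology

/-- The 2-torus as a product of two circles. -/
abbrev T2 := UnitAddCircle × UnitAddCircle

/-- The canonical projection `ℝ² → T²`. -/
noncomputable def pr : ℝ × ℝ → T2 := fun z => ((z.1 : UnitAddCircle), (z.2 : UnitAddCircle))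

lemma coe_add_int (x : ℝ) (n : ℤ) : ((x + n : ℝ) : UnitAddCircle) = (x : UnitAddCircle) := by
  have : ((n : ℝ) : UnitAddCircle) = 0 := by
    rw [AddCircle.coe_eq_zero_iff]; exact ⟨n, by simp⟩
  rw [AddCircle.coe_add, this, add_zero]

lemma pr_add_int (z : ℝ × ℝ) (v : ℤ × ℤ) :
    pr (z + ((v.1 : ℝ), (v.2 : ℝ))) = pr z := by
  simp only [pr, Prod.fst_add, Prod.snd_add]
  exact Prod.ext (coe_add_int z.1 v.1) (coe_add_int z.2 v.2)

lemma pr_eq_iff {z w : ℝ × ℝ} (h : pr z = pr w) :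
    ∃ v : ℤ × ℤ, w = z + ((v.1 : ℝ), (v.2 : ℝ)) := by
  have h1 : (z.1 : UnitAddCircle) = w.1 := congrArg Prod.fst h
  have h2 : (z.2 : UnitAddCircle) = w.2 := congrArg Prod.snd h
  rw [eq_comm, ← sub_eq_zero, ← AddCircle.coe_sub, AddCircle.coe_eq_zero_iff] at h1 h2
  obtain ⟨n1, hn1⟩ := h1; obtain ⟨n2, hn2⟩ := h2
  refine ⟨(n1, n2), ?_⟩
  have e1 : w.1 = z.1 + n1 := by simp at hn1; linarith
  have e2 : w.2 = z.2 + n2 := by simp at hn2; linarith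
  exact Prod.ext e1 e2

lemma iter_homeo (F : (ℝ × ℝ) ≃ₜ (ℝ × ℝ)) (k : ℕ) :
    ∃ G : (ℝ × ℝ) ≃ₜ (ℝ × ℝ), ⇑G = (⇑F)^[k] := by
  induction k with
  | zero => exact ⟨Homeomorph.refl _, rfl⟩
  | succ k ih =>
    obtain ⟨G, hG⟩ := ih
    exact ⟨G.trans F, by funext z; simp [hG, Function.iterate_succ_apply']⟩

/-- A non-resonant torus homeomorphism admits no periodic bounded
connected sets: if `X ⊆ T²` is connected and lifts to a bounded connected set,
then `fⁿ(X) ≠ X` for all `n ≠ 0`. -/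
theorem stmt0 (f : T2 ≃ₜ T2) (F : (ℝ × ℝ) ≃ₜ (ℝ × ℝ))
    (hlift : ∀ z : ℝ × ℝ, pr (F z) = f (pr z))
    (hdeg : ∀ (z : ℝ × ℝ) (v : ℤ × ℤ),
      F (z + ((v.1 : ℝ), (v.2 : ℝ))) = F z + ((v.1 : ℝ), (v.2 : ℝ)))
    (α β : ℝ)
    (hindep : ∀ N1 N2 N3 : ℤ, (N1 : ℝ) + N2 * α + N3 * β = 0 → N1 = 0 ∧ N2 = 0 ∧ N3 = 0)
    (hrot : ∀ z : ℝ × ℝ, ∃ v : ℤ × ℤ,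
      Tendsto (fun n : ℕ => ((n : ℝ)⁻¹) • ((⇑F)^[n] z - z)) atTop
        (𝓝 ((α + (v.1 : ℝ), β + (v.2 : ℝ)) : ℝ × ℝ)))
    (X : Set T2) (hXconn : IsConnected X)
    (Xt : Set (ℝ × ℝ)) (hXtconn : IsConnected Xt) (hbd : Bornology.IsBounded Xt)
    (hproj : pr '' Xt = X)
    (hcomp : ∃ x ∈ Xt, Xt = connectedComponentIn (pr ⁻¹' X) x) :
    ∀ n : ℤ, n ≠ 0 → (f.toEquiv ^ n) '' X ≠ X := by
  intro n hn habs
  -- Reduce to a positive natural iterate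
  have hcancel : ∀ k : ℤ, (f.toEquiv ^ (-k)) '' ((f.toEquiv ^ k) '' X) = X := by
    intro k
    rw [← Set.image_comp, ← Equiv.Perm.coe_mul, ← zpow_add, neg_add_cancel, zpow_zero,
      Equiv.Perm.coe_one, Set.image_id]
  obtain ⟨m, hm, hX⟩ : ∃ m : ℕ, 0 < m ∧ (⇑f)^[m] '' X = X := by
    have hcoe : ∀ k : ℕ, (⇑f)^[k] = ⇑(f.toEquiv ^ (k : ℤ)) := by
      intro k
      rw [zpow_natCast, ← Equiv.Perm.iterate_eq_pow]
      rfl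
    rcases lt_or_gt_of_ne hn with hneg | hpos
    · refine ⟨(-n).toNat, by omega, ?_⟩
      rw [hcoe, Int.toNat_of_nonneg (by omega)]
      conv_lhs => rw [← habs]
      exact hcancel n
    · refine ⟨n.toNat, by omega, ?_⟩
      rw [hcoe, Int.toNat_of_nonneg (by omega)]
      exact habs
  -- lift and equivariance for iterates
  have hliftk : ∀ (k : ℕ) (z : ℝ × ℝ), pr ((⇑F)^[k] z) = (⇑f)^[k] (pr z) := by
    intro k
    induction k with
    | zero => intro z; simp
    | succ k ih =>
      intro z
      rw [Function.iterate_succ_apply', Function.iterate_succ_apply', hlift, ih]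
  have hdegk : ∀ (k : ℕ) (z : ℝ × ℝ) (v : ℤ × ℤ),
      (⇑F)^[k] (z + ((v.1 : ℝ), (v.2 : ℝ))) = (⇑F)^[k] z + ((v.1 : ℝ), (v.2 : ℝ)) := by
    intro k
    induction k with
    | zero => intro z v; simp
    | succ k ih =>
      intro z v
      rw [Function.iterate_succ_apply', Function.iterate_succ_apply', ih, hdeg]
  set S : Set (ℝ × ℝ) := pr ⁻¹' X with hSdef
  -- S is invariant under F^[m]
  have hfmem : ∀ w : T2, w ∈ X ↔ (⇑f)^[m] w ∈ X := by
    intro w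
    constructor
    · intro hw; rw [← hX]; exact Set.mem_image_of_mem _ hw
    · intro hw
      rw [← hX] at hw
      obtain ⟨w', hw', he⟩ := hw
      have : w' = w := f.injective.iterate m he
      rwa [← this]
  have hSmem : ∀ z : ℝ × ℝ, z ∈ S ↔ (⇑F)^[m] z ∈ S := by
    intro z
    simp only [hSdef, Set.mem_preimage, hliftk]
    exact hfmem (pr z)
  -- S is invariant under integer translations
  have hStransmem : ∀ (z : ℝ × ℝ) (v : ℤ × ℤ), z + ((v.1 : ℝ), (v.2 : ℝ)) ∈ S ↔ z ∈ S := by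
    intro z v
    simp only [hSdef, Set.mem_preimage, pr_add_int]
  have hStrans : ∀ v : ℤ × ℤ,
      (fun z : ℝ × ℝ => z + ((v.1 : ℝ), (v.2 : ℝ))) '' S = S := by
    intro v
    ext z
    simp only [Set.mem_image]
    constructor
    · rintro ⟨w, hw, rfl⟩; exact (hStransmem w v).mpr hw
    · intro hz
      refine ⟨z + (((-v).1 : ℝ), ((-v).2 : ℝ)), (hStransmem z (-v)).mpr hz, ?_⟩
      ext <;> simp
  -- the base point
  obtain ⟨x, hx, hXt⟩ := hcomp
  have hxS : x ∈ S := by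
    simp only [hSdef, Set.mem_preimage]
    rw [← hproj]
    exact Set.mem_image_of_mem pr hx
  have hGxX : pr ((⇑F)^[m] x) ∈ X := by
    rw [hliftk]
    exact (hfmem (pr x)).mp hxS
  obtain ⟨y, hy, hyx⟩ : ∃ y ∈ Xt, pr y = pr ((⇑F)^[m] x) := by
    rw [← hproj] at hGxX
    obtain ⟨y, hy, hye⟩ := hGxX
    exact ⟨y, hy, hye⟩
  obtain ⟨v, hv⟩ := pr_eq_iff hyx
  -- F^[m] maps Xt onto Xt + v
  obtain ⟨G, hG⟩ := iter_homeo F m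
  have hGS : ⇑G '' S = S := by
    ext z
    simp only [Set.mem_image, hG]
    constructor
    · rintro ⟨w, hw, rfl⟩; exact (hSmem w).mp hw
    · intro hz
      have hinv : ∀ w : ℝ × ℝ, (⇑F)^[m] ((⇑F.symm)^[m] w) = w :=
        Function.LeftInverse.iterate F.apply_symm_apply m
      refine ⟨(⇑F.symm)^[m] z, ?_, hinv z⟩
      rw [hSmem, hinv]
      exact hz
  -- key: F^[m] '' Xt = Xt + v
  have hyXt : connectedComponentIn S y = Xt := by
    rw [hXt]
    exact (connectedComponentIn_eq (hXt ▸ hy)).symm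
  have hyS : y ∈ S := by
    rw [hSdef, Set.mem_preimage, ← hproj]
    exact Set.mem_image_of_mem pr hy
  have himg : (⇑F)^[m] '' Xt = (fun z => z + ((v.1 : ℝ), (v.2 : ℝ))) '' Xt := by
    have h1 : (⇑F)^[m] '' Xt = connectedComponentIn S (y + ((v.1 : ℝ), (v.2 : ℝ))) := by
      conv_lhs => rw [← hG, hXt]
      rw [G.image_connectedComponentIn hxS, hGS, hG, hv]
    have h2 := (Homeomorph.addRight (((v.1 : ℝ), (v.2 : ℝ)) : ℝ × ℝ)).image_connectedComponentIn
      (s := S) (x := y) hyS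
    simp only [Homeomorph.coe_addRight] at h2
    rw [hStrans v, hyXt] at h2
    rw [h1, ← h2]
  -- iterating: F^[m*k] x ∈ Xt + k • v
  have hiter : ∀ k : ℕ, ∃ w ∈ Xt,
      (⇑F)^[m * k] x = w + (((k * v.1 : ℤ) : ℝ), ((k * v.2 : ℤ) : ℝ)) := by
    intro k
    induction k with
    | zero => exact ⟨x, hx, by simp⟩
    | succ k ih =>
      obtain ⟨w, hw, hwe⟩ := ih
      have hstep : (⇑F)^[m * (k + 1)] x = (⇑F)^[m] ((⇑F)^[m * k] x) := by
        rw [← Function.iterate_add_apply]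
        congr 1
        ring
      obtain ⟨w', hw', hwe'⟩ : ∃ w' ∈ Xt,
          (⇑F)^[m] w = w' + ((v.1 : ℝ), (v.2 : ℝ)) := by
        have : (⇑F)^[m] w ∈ (fun z => z + ((v.1 : ℝ), (v.2 : ℝ))) '' Xt := by
          rw [← himg]; exact Set.mem_image_of_mem _ hw
        obtain ⟨w', hw', he⟩ := this
        exact ⟨w', hw', he.symm⟩
      refine ⟨w', hw', ?_⟩
      rw [hstep, hwe, hdegk m w ((k : ℤ) * v.1, (k : ℤ) * v.2), hwe']
      push_cast
      ext <;> simp <;> ring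
  -- limit argument
  obtain ⟨u, hu⟩ := hrot x
  have hmk : Tendsto (fun k : ℕ => m * k) atTop atTop :=
    Filter.tendsto_atTop_atTop.mpr fun b => ⟨b, fun a ha => le_trans ha (Nat.le_mul_of_pos_left a hm)⟩
  have h1 : Tendsto (fun k : ℕ => ((m * k : ℕ) : ℝ)⁻¹ • ((⇑F)^[m * k] x - x)) atTop
      (𝓝 (α + u.1, β + u.2)) := hu.comp hmk
  obtain ⟨C, hC⟩ := hbd.exists_norm_le
  choose w hw hwe using hiter
  have hmR : (m : ℝ) ≠ 0 := by positivity
  have hzero : Tendsto (fun k : ℕ => ((m * k : ℕ) : ℝ)⁻¹ • ((⇑F)^[m * k] x - x)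
      - (m : ℝ)⁻¹ • (((v.1 : ℝ), (v.2 : ℝ)) : ℝ × ℝ)) atTop (𝓝 0) := by
    have hb : Tendsto (fun k : ℕ => ((m * k : ℕ) : ℝ)⁻¹ * (C + ‖x‖)) atTop (𝓝 0) := by
      have h0 : Tendsto (fun k : ℕ => ((m * k : ℕ) : ℝ)⁻¹) atTop (𝓝 0) :=
        tendsto_inv_atTop_zero.comp (tendsto_natCast_atTop_atTop.comp hmk)
      simpa using h0.mul_const (C + ‖x‖)
    refine squeeze_zero_norm' ?_ hb
    filter_upwards [eventually_ge_atTop 1] with k hk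
    have hk0 : (k : ℝ) ≠ 0 := by positivity
    have hsplit : ((m * k : ℕ) : ℝ)⁻¹ • ((⇑F)^[m * k] x - x)
        - (m : ℝ)⁻¹ • (((v.1 : ℝ), (v.2 : ℝ)) : ℝ × ℝ)
        = ((m * k : ℕ) : ℝ)⁻¹ • (w k - x) := by
      rw [hwe k]
      have hks : ((m * k : ℕ) : ℝ)⁻¹ • ((((k * v.1 : ℤ) : ℝ), ((k * v.2 : ℤ) : ℝ)) : ℝ × ℝ)
          = (m : ℝ)⁻¹ • (((v.1 : ℝ), (v.2 : ℝ)) : ℝ × ℝ) := by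
        ext <;> · simp only [Prod.smul_fst, Prod.smul_snd, smul_eq_mul]
                  push_cast
                  field_simp
      have : w k + (((k * v.1 : ℤ) : ℝ), ((k * v.2 : ℤ) : ℝ)) - x
          = (w k - x) + (((k * v.1 : ℤ) : ℝ), ((k * v.2 : ℤ) : ℝ)) := by abel
      rw [this, smul_add, hks]
      abel
    rw [hsplit, norm_smul]
    have h1' : ‖((m * k : ℕ) : ℝ)⁻¹‖ = ((m * k : ℕ) : ℝ)⁻¹ := by
      rw [Real.norm_eq_abs, abs_of_nonneg]
      positivity
    rw [h1']
    have h2' : ‖w k - x‖ ≤ C + ‖x‖ := by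
      calc ‖w k - x‖ ≤ ‖w k‖ + ‖x‖ := norm_sub_le _ _
      _ ≤ C + ‖x‖ := by have := hC (w k) (hw k); linarith
    have : (0:ℝ) ≤ ((m * k : ℕ) : ℝ)⁻¹ := by positivity
    exact mul_le_mul_of_nonneg_left h2' this
  have h2 : Tendsto (fun k : ℕ => ((m * k : ℕ) : ℝ)⁻¹ • ((⇑F)^[m * k] x - x)) atTop
      (𝓝 ((m : ℝ)⁻¹ • (((v.1 : ℝ), (v.2 : ℝ)) : ℝ × ℝ))) := by
    rwa [← tendsto_sub_nhds_zero_iff]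
  have heq := tendsto_nhds_unique h1 h2
  have hα : α + (u.1 : ℝ) = (m : ℝ)⁻¹ * v.1 := by
    have := congrArg Prod.fst heq
    simpa using this
  have hv1 : (m : ℝ) * (α + u.1) = v.1 := by
    rw [hα]; field_simp
  have hcon : (((m : ℤ) * u.1 - v.1 : ℤ) : ℝ) + ((m : ℤ) : ℝ) * α + ((0 : ℤ) : ℝ) * β = 0 := by
    push_cast
    push_cast at hv1
    linarith [hv1]
  obtain ⟨-, hm0, -⟩ := hindep _ _ _ hcon
  simp only [Int.natCast_eq_zero] at hm0
  omega
end

section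
/- Let f be a homeomorphism of the torus isotopic to the identity with no periodic points, and let F: R^2 → R^2 be a lift of f. Then for every closed topological disk D ⊂ R^2, every integer N ≠ 0 and every (p,q) ∈ Z^2, neither F^N(D) ⊆ T_{p,q}(D) nor T_{p,q}(D) ⊆ F^N(D) holds, where T_{p,q}(x,y) = (x+p, y+q). -/
/-!
If `F^N(D) ⊆ D + v`, then `x ↦ F^N x - v` maps the disk `D` into itself, and if `D + v ⊆ F^N(D)`
then so does `x ↦ F^{-N}(x + v)`. By Brouwer either map has a fixed point `z`, i.e.
`F^N z = z + v`; projecting to the torus, `pr z` is a periodic point of `f`.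

Brouwer's theorem in the plane is proved by a winding argument: a fixed-point-free self-map `g`
of the unit disk yields a nonvanishing map `ℂ → ℂ` that is the identity far out. Since `ℂ` is
simply connected, this map has a continuous logarithm, which would restrict to a continuous
logarithm of the identity on a large circle.
-/

open Filter Topology

open Complex Metric Set Function Module
open scoped Real

theorem IsPreconnected.eq_of_exp_eq_one {X : Type*} [TopologicalSpace X] {S : Set X}
    (hS : IsPreconnected S) {u : X → ℂ} (hu : ContinuousOn u S) (h : ∀ x ∈ S, exp (u x) = 1)
    {x y : X} (hx : x ∈ S) (hy : y ∈ S) : u x = u y := by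
  refine hS.constant_of_mapsTo (T := AddSubgroup.zmultiples (2 * π * I))
    (isDiscrete_iff_discreteTopology.mpr (NormedSpace.discreteTopology_zmultiples _)) hu
    (fun z hz => ?_) hx hy
  obtain ⟨n, hn⟩ := exp_eq_one_iff.mp (h z hz)
  exact ⟨n, by simp [hn]⟩

theorem exists_continuous_exp_eq {A : Type*} [TopologicalSpace A] [SimplyConnectedSpace A]
    [LocallyPathConnectedSpace A] {f : A → ℂ} (hf : Continuous f) (hf₀ : ∀ a, f a ≠ 0) :
    ∃ L : A → ℂ, Continuous L ∧ ∀ a, exp (L a) = f a := by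
  obtain ⟨a₀⟩ : Nonempty A := inferInstance
  obtain ⟨L, ⟨-, hL⟩, -⟩ := isCoveringMapOn_exp.existsUnique_continuousMap_lifts ⟨f, hf⟩
    (exp_log (hf₀ a₀)) hf₀
  exact ⟨L, L.continuous, congrFun hL⟩

theorem exists_mem_sphere_exp_ne {R : ℝ} (hR : 0 < R) {L : ℂ → ℂ}
    (hL : ContinuousOn L (sphere 0 R)) : ∃ w ∈ sphere (0 : ℂ) R, exp (L w) ≠ w := by
  by_contra! hlog
  -- `L ∘ exp ∘ a - a` takes values in `2πiℤ`, so it is constant on `[0, 1]`; but the loop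
  -- `exp ∘ a` closes up while `a` increases by `2πi`.
  set a : ℝ → ℂ := fun s => Real.log R + 2 * π * I * s
  have ha_mem : MapsTo (fun s => exp (a s)) (Icc 0 1) (sphere 0 R) := fun s _ => by
    simp [a, norm_exp, Real.exp_log hR]
  have hu : ContinuousOn (fun s => L (exp (a s)) - a s) (Icc 0 1) :=
    (hL.comp (by fun_prop) ha_mem).sub (by fun_prop)
  have hconst := isPreconnected_Icc.eq_of_exp_eq_one hu
    (fun s hs => by rw [exp_sub, hlog _ (ha_mem hs), div_self (exp_ne_zero _)])
    (left_mem_Icc.mpr zero_le_one) (right_mem_Icc.mpr zero_le_one)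
  have hloop : exp (a 1) = exp (a 0) := by simp [a, exp_add]
  rw [hloop, sub_right_inj] at hconst
  simp [a, Real.pi_ne_zero] at hconst

theorem Complex.exists_eq_zero_of_eqOn_compl {Φ : ℂ → ℂ} (hΦ : Continuous Φ) {s : Set ℂ}
    (hs : Bornology.IsBounded s) (hid : EqOn Φ id sᶜ) : ∃ z, Φ z = 0 := by
  by_contra! hΦ₀
  obtain ⟨L, hL, hexp⟩ := exists_continuous_exp_eq hΦ hΦ₀
  obtain ⟨r, hr⟩ := hs.subset_ball 0
  have hR : 0 < max r 1 := lt_max_of_lt_right one_pos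
  obtain ⟨w, hw, hne⟩ := exists_mem_sphere_exp_ne hR hL.continuousOn
  refine hne ((hexp w).trans (hid fun hws => ?_))
  have := mem_ball_zero_iff.mp (hr hws)
  rw [mem_sphere_zero_iff_norm.mp hw] at this
  exact (le_max_left r 1).not_gt this

section NormedSpace

variable {E : Type*} [NormedAddCommGroup E] [NormedSpace ℝ E]

noncomputable def unitBallRetraction (x : E) : E := (max 1 ‖x‖)⁻¹ • x

theorem unitBallRetraction_mem (x : E) : unitBallRetraction x ∈ closedBall (0 : E) 1 := by
  rw [mem_closedBall_zero_iff, unitBallRetraction, norm_smul, norm_inv,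
    Real.norm_of_nonneg (by positivity), inv_mul_le_one₀ (by positivity)]
  exact le_max_right _ _

theorem unitBallRetraction_of_mem {x : E} (hx : x ∈ closedBall (0 : E) 1) :
    unitBallRetraction x = x := by
  rw [unitBallRetraction, max_eq_left (mem_closedBall_zero_iff.mp hx), inv_one, one_smul]

theorem continuous_unitBallRetraction : Continuous (unitBallRetraction (E := E)) :=
  ((continuous_const.max continuous_norm).inv₀ fun _ => by positivity).smul continuous_id

variable [FiniteDimensional ℝ E]

theorem exists_eq_zero_of_eqOn_compl_of_finrank_eq_two (hE : finrank ℝ E = 2) {Φ : E → E}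
    (hΦ : Continuous Φ) {s : Set E} (hs : Bornology.IsBounded s) (hid : EqOn Φ id sᶜ) :
    ∃ x, Φ x = 0 := by
  obtain ⟨e⟩ := FiniteDimensional.nonempty_continuousLinearEquiv_of_finrank_eq
    (hE.trans Complex.finrank_real_complex.symm)
  obtain ⟨z, hz⟩ := Complex.exists_eq_zero_of_eqOn_compl (Φ := e ∘ Φ ∘ e.symm) (by fun_prop)
    (e.lipschitz.isBounded_image hs) fun z hz => by
      have : e.symm z ∉ s := fun h => hz ⟨_, h, e.apply_symm_apply z⟩
      simp [hid this]
  exact ⟨e.symm z, by simpa using hz⟩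

theorem exists_isFixedPt_closedBall (hE : finrank ℝ E = 2)
    {g : closedBall (0 : E) 1 → closedBall (0 : E) 1} (hg : Continuous g) :
    ∃ x, IsFixedPt g x := by
  by_contra! hfix
  -- `Φ` is the identity outside `closedBall 0 2`; a zero of `Φ` in the unit ball is a fixed point
  -- of `g`, and there is none outside since `‖ρ ‖x‖ • g _‖ ≤ 1`.
  set ρ : ℝ → ℝ := fun t => max 0 (min 1 (2 - t))
  set Φ : E → E := fun x => x - ρ ‖x‖ • (g ⟨_, unitBallRetraction_mem x⟩ : E)
  have hΦ : Continuous Φ := continuous_id.sub <| (by fun_prop : Continuous fun x : E => ρ ‖x‖).smul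
    (continuous_subtype_val.comp (hg.comp (continuous_unitBallRetraction.subtype_mk _)))
  obtain ⟨x, hx⟩ := exists_eq_zero_of_eqOn_compl_of_finrank_eq_two hE hΦ
    (isBounded_closedBall (x := 0) (r := 2)) fun x hx => by
      rw [mem_compl_iff, mem_closedBall_zero_iff, not_le] at hx
      have : ρ ‖x‖ = 0 := max_eq_left (min_le_of_right_le (by linarith))
      simp [Φ, this]
  have hx' : x = ρ ‖x‖ • (g ⟨_, unitBallRetraction_mem x⟩ : E) := sub_eq_zero.mp hx
  by_cases hx₁ : x ∈ closedBall (0 : E) 1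
  · have hρ : ρ ‖x‖ = 1 := by
      have := mem_closedBall_zero_iff.mp hx₁
      simp only [ρ]
      rw [min_eq_left (by linarith), max_eq_right zero_le_one]
    have hr : (⟨_, unitBallRetraction_mem x⟩ : closedBall (0 : E) 1) = ⟨x, hx₁⟩ :=
      Subtype.ext (unitBallRetraction_of_mem hx₁)
    rw [hρ, one_smul, hr] at hx'
    exact hfix ⟨x, hx₁⟩ (Subtype.ext hx'.symm)
  · have hρ : ρ ‖x‖ ≤ 1 := max_le zero_le_one (min_le_left _ _)
    have hg₁ := mem_closedBall_zero_iff.mp (g ⟨_, unitBallRetraction_mem x⟩).2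
    apply hx₁
    rw [mem_closedBall_zero_iff, hx', norm_smul, Real.norm_of_nonneg (le_max_left _ _)]
    exact mul_le_one₀ hρ (norm_nonneg _) hg₁

theorem exists_fixedPoint_of_homeomorph_closedBall (hE : finrank ℝ E = 2) {X : Type*}
    [TopologicalSpace X] {D : Set X} (hD : Nonempty (closedBall (0 : E) 1 ≃ₜ D)) {G : X → X}
    (hG : ContinuousOn G D) (hGD : MapsTo G D D) : ∃ x ∈ D, G x = x := by
  obtain ⟨φ⟩ := hD
  obtain ⟨y, hy⟩ := exists_isFixedPt_closedBall hE
    (φ.symm.continuous.comp ((hG.mapsToRestrict hGD).comp φ.continuous))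
  refine ⟨φ y, (φ y).2, congrArg Subtype.val (?_ : hGD.restrict G D D (φ y) = φ y)⟩
  simpa using congrArg φ hy

theorem not_image_subset_image_add_right (hE : finrank ℝ E = 2) {X : Type*} [TopologicalSpace X]
    [AddGroup X] [ContinuousAdd X] {D : Set X} (hD : Nonempty (closedBall (0 : E) 1 ≃ₜ D))
    (H : X ≃ₜ X) {v : X} (hH : ∀ z, H z ≠ z + v) :
    ¬ H '' D ⊆ (· + v) '' D ∧ ¬ (· + v) '' D ⊆ H '' D := by
  constructor
  · intro hsub
    obtain ⟨z, -, hz⟩ := exists_fixedPoint_of_homeomorph_closedBall hE hD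
      (G := fun x => H x + -v) (by fun_prop) fun x hx => by
        obtain ⟨y, hy, hyx⟩ := hsub (mem_image_of_mem H hx)
        simpa [← hyx] using hy
    exact hH z (by simpa [← sub_eq_add_neg, sub_eq_iff_eq_add] using hz)
  · intro hsub
    obtain ⟨z, -, hz⟩ := exists_fixedPoint_of_homeomorph_closedBall hE hD
      (G := fun x => H.symm (x + v)) (by fun_prop) fun x hx => by
        obtain ⟨y, hy, hyx⟩ := hsub (mem_image_of_mem (· + v) hx)
        simpa [← hyx] using hy
    exact hH z (by rw [← hz, H.apply_symm_apply, hz])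

end NormedSpace

theorem Homeomorph.toEquiv_zpow {X : Type*} [TopologicalSpace X] (F : X ≃ₜ X) (N : ℤ) :
    (F ^ N).toEquiv = F.toEquiv ^ N :=
  map_zpow (⟨⟨Homeomorph.toEquiv, rfl⟩, fun _ _ => rfl⟩ : (X ≃ₜ X) →* Equiv.Perm X) F N

theorem Function.Semiconj.perm_zpow {α β : Type*} {φ : α → β} {σ : Equiv.Perm α}
    {τ : Equiv.Perm β} (h : Semiconj φ σ τ) (N : ℤ) : Semiconj φ ⇑(σ ^ N) ⇑(τ ^ N) := by
  have hpow (n : ℕ) : Semiconj φ ⇑(σ ^ n) ⇑(τ ^ n) := by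
    simpa only [Equiv.Perm.iterate_eq_pow] using h.iterate_right n
  cases N with
  | ofNat n => exact hpow n
  | negSucc n =>
    simpa only [zpow_negSucc, Equiv.Perm.inv_def] using
      (hpow (n + 1)).inverses_right (σ ^ (n + 1)).apply_symm_apply (τ ^ (n + 1)).symm_apply_apply

theorem Equiv.Perm.zpow_apply_ne_self {α : Type*} {σ : Equiv.Perm α}
    (hσ : ∀ x (n : ℕ), 0 < n → σ^[n] x ≠ x) {N : ℤ} (hN : N ≠ 0) (x : α) : (σ ^ N) x ≠ x := by
  intro hx
  have hper : minimalPeriod (σ • ·) x = 0 :=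
    minimalPeriod_eq_zero_of_notMem_periodicPts fun ⟨n, hn, hnx⟩ => hσ x n hn hnx
  rw [← Equiv.Perm.smul_def, MulAction.zpow_smul_eq_iff_minimalPeriod_dvd, hper, Nat.cast_zero,
    zero_dvd_iff] at hx
  exact hN hx

theorem pr_add_intCast (z : ℝ × ℝ) (p q : ℤ) : pr (z + ((p : ℝ), (q : ℝ))) = pr z := by
  simp [pr]

theorem stmt1_general (f : T2 ≃ₜ T2) (F : (ℝ × ℝ) ≃ₜ (ℝ × ℝ))
    (hlift : ∀ z : ℝ × ℝ, pr (F z) = f (pr z))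
    (hper : ∀ (z : T2) (n : ℕ), 0 < n → (⇑f)^[n] z ≠ z)
    (D : Set (ℝ × ℝ))
    (hD : Nonempty ((Metric.closedBall (0 : ℝ × ℝ) 1 : Set (ℝ × ℝ)) ≃ₜ D)) :
    ∀ N : ℤ, N ≠ 0 → ∀ p q : ℤ,
      ¬ ((F.toEquiv ^ N) '' D ⊆ (fun z : ℝ × ℝ => z + ((p : ℝ), (q : ℝ))) '' D) ∧
      ¬ ((fun z : ℝ × ℝ => z + ((p : ℝ), (q : ℝ))) '' D ⊆ (F.toEquiv ^ N) '' D) := by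
  intro N hN p q
  have hsemiconj : Semiconj pr ⇑(F.toEquiv ^ N) ⇑(f.toEquiv ^ N) :=
    Semiconj.perm_zpow (σ := F.toEquiv) (τ := f.toEquiv) hlift N
  have hno_fix : ∀ z, (F ^ N) z ≠ z + ((p : ℝ), (q : ℝ)) := fun z hz =>
    Equiv.Perm.zpow_apply_ne_self hper hN (pr z) <| by
      rw [← hsemiconj z, ← F.toEquiv_zpow, Homeomorph.coe_toEquiv, hz, pr_add_intCast]
  rw [← F.toEquiv_zpow, Homeomorph.coe_toEquiv]
  exact not_image_subset_image_add_right (by simp) hD (F ^ N) hno_fix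

/-- If `f` is a torus homeomorphism isotopic to the identity (its lift `F`
commutes with integer translations) without periodic points, then for any closed
topological disk `D ⊆ ℝ²`, any `N ≠ 0` and any integer translation `T_{p,q}`,
neither `F^N(D) ⊆ T_{p,q}(D)` nor `T_{p,q}(D) ⊆ F^N(D)`. -/
theorem stmt1 (f : T2 ≃ₜ T2) (F : (ℝ × ℝ) ≃ₜ (ℝ × ℝ))
    (hlift : ∀ z : ℝ × ℝ, pr (F z) = f (pr z))
    (hdeg : ∀ (z : ℝ × ℝ) (v : ℤ × ℤ),
      F (z + ((v.1 : ℝ), (v.2 : ℝ))) = F z + ((v.1 : ℝ), (v.2 : ℝ)))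
    (hper : ∀ (z : T2) (n : ℕ), 0 < n → (⇑f)^[n] z ≠ z)
    (D : Set (ℝ × ℝ))
    (hD : Nonempty ((Metric.closedBall (0 : ℝ × ℝ) 1 : Set (ℝ × ℝ)) ≃ₜ D)) :
    ∀ N : ℤ, N ≠ 0 → ∀ p q : ℤ,
      ¬ ((F.toEquiv ^ N) '' D ⊆ (fun z : ℝ × ℝ => z + ((p : ℝ), (q : ℝ))) '' D) ∧
      ¬ ((fun z : ℝ × ℝ => z + ((p : ℝ), (q : ℝ))) '' D ⊆ (F.toEquiv ^ N) '' D) :=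
  stmt1_general f F hlift hper D hD
end

section
/- Let f be a homeomorphism of a compact metric space X semi-conjugate via a continuous surjection π to a minimal homeomorphism τ (π ∘ f = τ ∘ π), and suppose the regular set R_π is nonempty. Then f has a unique minimal set M, and M equals the closure of the orbit of z for every z ∈ R_π, and M equals the closure of R_π. -/
open Filter Topology

/-!
If `z` is regular, i.e. `π⁻¹(π z) = {z}`, then `z` lies in every nonempty closed `f`-invariant
set `S`: the compact set `π(S)` is closed and `τ`-invariant, hence all of `X` by minimality of
`τ`, so `π z = π w` for some `w ∈ S`, and regularity forces `w = z`. Thus the orbit closure of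
a regular point is contained in every nonempty closed invariant set, which makes it the unique
minimal set. Since the regular set is itself invariant, its closure is that minimal set too.
-/

/-- A minimal set of a map `f`: nonempty, closed, invariant, with no proper
nonempty closed invariant subset. -/
def IsMinimalSet {X : Type*} [TopologicalSpace X] (f : X → X) (M : Set X) : Prop :=
  M.Nonempty ∧ IsClosed M ∧ f '' M = M ∧
    ∀ M' ⊆ M, M'.Nonempty → IsClosed M' → f '' M' = M' → M' = M

open Pointwise

section Orbit

variable {X : Type*}

def zpowOrbit (g : Equiv.Perm X) (x : X) : Set X := {w | ∃ n : ℤ, w = (g ^ n) x}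

lemma self_mem_zpowOrbit (g : Equiv.Perm X) (x : X) : x ∈ zpowOrbit g x := ⟨0, rfl⟩

lemma image_zpowOrbit (g : Equiv.Perm X) (x : X) : g '' zpowOrbit g x = zpowOrbit g x := by
  ext w
  constructor
  · rintro ⟨_, ⟨n, rfl⟩, rfl⟩
    exact ⟨1 + n, by rw [zpow_one_add, Equiv.Perm.mul_apply]⟩
  · rintro ⟨n, rfl⟩
    refine ⟨(g ^ (n - 1)) x, ⟨n - 1, rfl⟩, ?_⟩
    rw [← Equiv.Perm.mul_apply, ← zpow_one_add, add_sub_cancel]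

/-- `g '' K = K` says that `g` lies in the stabilizer of `K`, hence so do all its powers. -/
lemma zpow_apply_mem_of_image_eq {g : Equiv.Perm X} {K : Set X} (hK : g '' K = K) (n : ℤ)
    {x : X} (hx : x ∈ K) : (g ^ n) x ∈ K := by
  have hg : g ∈ MulAction.stabilizer (Equiv.Perm X) K := by
    rw [MulAction.mem_stabilizer_iff, ← Set.image_smul]
    simpa only [Equiv.Perm.smul_def] using hK
  have hgn := MulAction.mem_stabilizer_iff.mp (zpow_mem hg n)
  rw [← hgn]
  exact Set.smul_mem_smul_set hx

lemma zpowOrbit_subset_of_image_eq {g : Equiv.Perm X} {K : Set X} (hK : g '' K = K) {x : X}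
    (hx : x ∈ K) : zpowOrbit g x ⊆ K := by
  rintro _ ⟨n, rfl⟩
  exact zpow_apply_mem_of_image_eq hK n hx

variable [TopologicalSpace X]

lemma image_closure_zpowOrbit (f : X ≃ₜ X) (x : X) :
    f '' closure (zpowOrbit f.toEquiv x) = closure (zpowOrbit f.toEquiv x) := by
  rw [f.image_closure]
  exact congrArg closure (image_zpowOrbit f.toEquiv x)

lemma closure_zpowOrbit_subset_of_image_eq {f : X ≃ₜ X} {S : Set X} (hS : IsClosed S)
    (hSinv : f '' S = S) {x : X} (hx : x ∈ S) : closure (zpowOrbit f.toEquiv x) ⊆ S :=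
  closure_minimal (zpowOrbit_subset_of_image_eq (g := f.toEquiv) hSinv hx) hS

lemma eq_univ_of_dense_zpowOrbit {τ : Equiv.Perm X} (hτ : ∀ y, Dense (zpowOrbit τ y))
    {K : Set X} (hne : K.Nonempty) (hcl : IsClosed K) (hinv : τ '' K = K) : K = Set.univ := by
  obtain ⟨y, hy⟩ := hne
  exact Set.eq_univ_of_univ_subset <|
    (hτ y).closure_eq ▸ closure_minimal (zpowOrbit_subset_of_image_eq hinv hy) hcl

end Orbit

section MinimalSet

variable {X : Type*} [TopologicalSpace X] {f : X → X} {M : Set X}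

lemma isMinimalSet_of_forall_subset (hne : M.Nonempty) (hcl : IsClosed M) (hinv : f '' M = M)
    (hleast : ∀ S : Set X, S.Nonempty → IsClosed S → f '' S = S → M ⊆ S) :
    IsMinimalSet f M :=
  ⟨hne, hcl, hinv, fun S hSM hSne hScl hSinv => hSM.antisymm (hleast S hSne hScl hSinv)⟩

lemma IsMinimalSet.eq_of_forall_subset {M' : Set X} (hM' : IsMinimalSet f M')
    (hM : IsMinimalSet f M)
    (hleast : ∀ S : Set X, S.Nonempty → IsClosed S → f '' S = S → M ⊆ S) : M' = M :=
  (hM'.2.2.2 M (hleast M' hM'.1 hM'.2.1 hM'.2.2.1) hM.1 hM.2.1 hM.2.2.1).symm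

end MinimalSet

section RegularSet

variable {X Y : Type*}

def regularSet (π : X → Y) : Set X := {z | π ⁻¹' {π z} = {z}}

lemma preimage_singleton_apply_of_semiconj {π : X → Y} {f : X ≃ X} {τ : Y → Y}
    (hsemi : Function.Semiconj π f τ) (hτ : Function.Injective τ) (z : X) :
    π ⁻¹' {π (f z)} = f '' (π ⁻¹' {π z}) := by
  ext w
  rw [Set.mem_image_equiv, Set.mem_preimage, Set.mem_preimage, Set.mem_singleton_iff,
    Set.mem_singleton_iff, hsemi z, ← f.apply_symm_apply w, hsemi (f.symm w),
    f.symm_apply_apply]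
  exact hτ.eq_iff

lemma apply_mem_regularSet_iff {π : X → Y} {f : X ≃ X} {τ : Y → Y}
    (hsemi : Function.Semiconj π f τ) (hτ : Function.Injective τ) {z : X} :
    f z ∈ regularSet π ↔ z ∈ regularSet π := by
  change π ⁻¹' {π (f z)} = {f z} ↔ π ⁻¹' {π z} = {z}
  rw [preimage_singleton_apply_of_semiconj hsemi hτ, ← Set.image_singleton (f := f) (a := z)]
  exact (Set.image_injective.mpr f.injective).eq_iff

lemma image_regularSet {π : X → Y} {f : X ≃ X} {τ : Y → Y}
    (hsemi : Function.Semiconj π f τ) (hτ : Function.Injective τ) :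
    f '' regularSet π = regularSet π := by
  ext w
  rw [Set.mem_image_equiv, ← apply_mem_regularSet_iff hsemi hτ, f.apply_symm_apply]

lemma regularSet_subset_of_image_eq [TopologicalSpace X] [CompactSpace X] [TopologicalSpace Y]
    [T2Space Y] {π : X → Y} (hπ : Continuous π) {f : X → X} {τ : Equiv.Perm Y}
    (hτ : ∀ y, Dense (zpowOrbit τ y)) (hsemi : Function.Semiconj π f τ) {S : Set X}
    (hne : S.Nonempty) (hcl : IsClosed S) (hinv : f '' S = S) : regularSet π ⊆ S := by
  have hπS : π '' S = Set.univ := by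
    refine eq_univ_of_dense_zpowOrbit hτ (hne.image π) (hcl.isCompact.image hπ).isClosed ?_
    rw [← hsemi.set_image S, hinv]
  intro z hz
  obtain ⟨w, hwS, hwz⟩ := hπS.symm ▸ Set.mem_univ (π z)
  have hw : w ∈ π ⁻¹' {π z} := hwz
  rw [hz, Set.mem_singleton_iff] at hw
  exact hw ▸ hwS

end RegularSet

theorem stmt7_general {X : Type*} [MetricSpace X] [CompactSpace X]
    (f τ : X ≃ₜ X)
    (hτmin : ∀ z : X, Dense {w : X | ∃ n : ℤ, w = (τ.toEquiv ^ n) z})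
    (π : X → X) (hπc : Continuous π)
    (hsemi : ∀ z : X, π (f z) = τ (π z))
    (Rπ : Set X) (hRπ : Rπ = {z : X | π ⁻¹' {π z} = {z}}) (hne : Rπ.Nonempty) :
    ∃ M : Set X, IsMinimalSet ⇑f M ∧
      (∀ M' : Set X, IsMinimalSet ⇑f M' → M' = M) ∧
      (∀ z ∈ Rπ, M = closure {w : X | ∃ n : ℤ, w = (f.toEquiv ^ n) z}) ∧
      M = closure Rπ := by
  change Rπ = regularSet π at hRπ
  subst hRπ
  have hreg : ∀ S : Set X, S.Nonempty → IsClosed S → f '' S = S → regularSet π ⊆ S :=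
    fun S => regularSet_subset_of_image_eq hπc hτmin hsemi
  have hleast : ∀ z ∈ regularSet π, ∀ S : Set X, S.Nonempty → IsClosed S → f '' S = S →
      closure (zpowOrbit f.toEquiv z) ⊆ S := fun z hz S hne hcl hinv =>
    closure_zpowOrbit_subset_of_image_eq hcl hinv (hreg S hne hcl hinv hz)
  have hmin : ∀ z ∈ regularSet π, IsMinimalSet f (closure (zpowOrbit f.toEquiv z)) :=
    fun z hz => isMinimalSet_of_forall_subset
      ⟨z, subset_closure (self_mem_zpowOrbit _ z)⟩ isClosed_closure
      (image_closure_zpowOrbit f z) (hleast z hz)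
  obtain ⟨z₀, hz₀⟩ := hne
  refine ⟨closure (zpowOrbit f.toEquiv z₀), hmin z₀ hz₀,
    fun M' hM' => hM'.eq_of_forall_subset (hmin z₀ hz₀) (hleast z₀ hz₀),
    fun z hz => (hmin z hz).eq_of_forall_subset (hmin z₀ hz₀) (hleast z₀ hz₀) |>.symm, ?_⟩
  have hRinv : f '' regularSet π = regularSet π :=
    image_regularSet (f := f.toEquiv) hsemi τ.injective
  refine (closure_mono (zpowOrbit_subset_of_image_eq (g := f.toEquiv) hRinv hz₀)).antisymm ?_
  exact closure_minimal (hreg _ (hmin z₀ hz₀).1 isClosed_closure (hmin z₀ hz₀).2.2.1)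
    isClosed_closure

/-- If a homeomorphism `f` of a compact metric space is semi-conjugate
via a continuous surjection `π` to a minimal homeomorphism `τ`, and the regular set
`R_π` is nonempty, then `f` has a unique minimal set `M`, which equals the closure
of the orbit of any `z ∈ R_π`, and equals the closure of `R_π`. -/
theorem stmt7 {X : Type*} [MetricSpace X] [CompactSpace X]
    (f τ : X ≃ₜ X)
    (hτmin : ∀ z : X, Dense {w : X | ∃ n : ℤ, w = (τ.toEquiv ^ n) z})
    (π : X → X) (hπc : Continuous π) (hπs : Function.Surjective π)
    (hsemi : ∀ z : X, π (f z) = τ (π z))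
    (Rπ : Set X) (hRπ : Rπ = {z : X | π ⁻¹' {π z} = {z}}) (hne : Rπ.Nonempty) :
    ∃ M : Set X, IsMinimalSet ⇑f M ∧
      (∀ M' : Set X, IsMinimalSet ⇑f M' → M' = M) ∧
      (∀ z ∈ Rπ, M = closure {w : X | ∃ n : ℤ, w = (f.toEquiv ^ n) z}) ∧
      M = closure Rπ :=
  stmt7_general f τ hτmin π hπc hsemi Rπ hRπ hne
end

section
/- There exists a Cantor set Q ⊂ [−1, 1] containing 0, obtained as [−1,1] minus a countable union of disjoint open intervals I_k (k ≥ 1), such that for every k, if x_k denotes the midpoint of I_k, then the length |I_k| ≤ (d(0, x_k))^2, where d is the Euclidean distance. -/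
/-!
Pick parameters `e i` dense in `(0, 1) \ {1/2}` and symmetric under `t ↦ 1 - t`, with lengths
`l i ≤ (e i - 1/2)²` of total mass at most `1`. The staircase
`F t = -1 + s t + ∑_{e i ≤ t} l i`, of slope `s = 2 - ∑ l i ≥ 1`, runs from `-1` to `1` and jumps
over an interval of length `l i` at each `e i`; by symmetry `F (1/2) = 0`. These intervals have
disjoint closures inside `(-1, 1)` and are dense there (between two values of `F` lies a jump,
`e` being dense), so their complement is a Cantor set. Since `F` expands distances by `s ≥ 1`,
the gap at `e i` stays at distance at least `|e i - 1/2| ≥ √(l i)` from `0 = F (1/2)`.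
-/

open Set Filter Topology Function

section GapFamily

variable {ι : Type*}

def gapComplement (c d : ℝ) (a b : ι → ℝ) : Set ℝ := Icc c d \ ⋃ i, Ioo (a i) (b i)

theorem isClosed_gapComplement (c d : ℝ) (a b : ι → ℝ) : IsClosed (gapComplement c d a b) :=
  isClosed_Icc.sdiff (isOpen_iUnion fun _ => isOpen_Ioo)

theorem isCompact_gapComplement (c d : ℝ) (a b : ι → ℝ) : IsCompact (gapComplement c d a b) :=
  isCompact_Icc.diff (isOpen_iUnion fun _ => isOpen_Ioo)

structure IsGapFamily (c d : ℝ) (a b : ι → ℝ) : Prop where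
  lower_lt_left : ∀ i, c < a i
  left_lt_right : ∀ i, a i < b i
  right_lt_upper : ∀ i, b i < d
  separated : Pairwise fun i j => b i < a j ∨ b j < a i
  dense : ∀ x y, c ≤ x → x < y → y ≤ d → ∃ i, (Ioo (a i) (b i) ∩ Ioo x y).Nonempty

namespace IsGapFamily

variable {c d : ℝ} {a b : ι → ℝ}

theorem pairwise_disjoint (h : IsGapFamily c d a b) :
    Pairwise fun i j => Disjoint (Ioo (a i) (b i)) (Ioo (a j) (b j)) := by
  intro i j hij
  rw [Set.disjoint_iff]
  rintro x ⟨⟨hai, hbi⟩, haj, hbj⟩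
  rcases h.separated hij with hsep | hsep <;> linarith

theorem right_ne_left (h : IsGapFamily c d a b) (i j : ι) : b i ≠ a j := by
  rcases eq_or_ne i j with rfl | hij
  · exact (h.left_lt_right i).ne'
  · rcases h.separated hij with hsep | hsep
    · exact hsep.ne
    · linarith [h.left_lt_right i, h.left_lt_right j]

theorem left_mem (h : IsGapFamily c d a b) (i : ι) : a i ∈ gapComplement c d a b := by
  refine ⟨⟨(h.lower_lt_left i).le, ((h.left_lt_right i).trans (h.right_lt_upper i)).le⟩, ?_⟩
  simp only [mem_iUnion, mem_Ioo, not_exists, not_and, not_lt]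
  intro j hj
  rcases eq_or_ne i j with rfl | hij
  · exact absurd hj (lt_irrefl _)
  · rcases h.separated hij with hsep | hsep
    · linarith [h.left_lt_right i]
    · linarith [h.left_lt_right j]

theorem right_mem (h : IsGapFamily c d a b) (i : ι) : b i ∈ gapComplement c d a b := by
  refine ⟨⟨((h.lower_lt_left i).trans (h.left_lt_right i)).le, (h.right_lt_upper i).le⟩, ?_⟩
  simp only [mem_iUnion, mem_Ioo, not_exists, not_and, not_lt]
  intro j hj
  rcases eq_or_ne i j with rfl | hij
  · exact le_rfl
  · rcases h.separated hij with hsep | hsep <;> linarith [h.left_lt_right i]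

theorem isTotallyDisconnected (h : IsGapFamily c d a b) :
    IsTotallyDisconnected (gapComplement c d a b) := by
  intro T hTQ hT x hx y hy
  by_contra hxy
  wlog hlt : x < y generalizing x y
  · exact this hy hx (Ne.symm hxy) ((Ne.symm hxy).lt_of_le (not_lt.1 hlt))
  obtain ⟨i, z, hz, hzxy⟩ := h.dense x y (hTQ hx).1.1 hlt (hTQ hy).1.2
  exact (hTQ (hT.Icc_subset hx hy (Ioo_subset_Icc_self hzxy))).2 (mem_iUnion.2 ⟨i, hz⟩)

theorem exists_left_mem_Ioo (h : IsGapFamily c d a b) {x : ℝ}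
    (hx : x ∈ gapComplement c d a b) (hxd : x < d) (hxa : ∀ i, a i ≠ x) {ε : ℝ} (hε : 0 < ε) :
    ∃ i, a i ∈ Ioo x (x + ε) := by
  obtain ⟨i, z, ⟨haz, hzb⟩, hxz, hzv⟩ :=
    h.dense x (min (x + ε) d) hx.1.1 (lt_min (by linarith) hxd) (min_le_right _ _)
  have hxa : x < a i := (hxa i).symm.lt_of_le <| not_lt.1 fun hax =>
    hx.2 (mem_iUnion.2 ⟨i, hax, hxz.trans hzb⟩)
  exact ⟨i, hxa, haz.trans (hzv.trans_le (min_le_left _ _))⟩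

theorem exists_right_mem_Ioo (h : IsGapFamily c d a b) {x : ℝ}
    (hx : x ∈ gapComplement c d a b) (hcx : c < x) (hxb : ∀ i, b i ≠ x) {ε : ℝ} (hε : 0 < ε) :
    ∃ i, b i ∈ Ioo (x - ε) x := by
  obtain ⟨i, z, ⟨haz, hzb⟩, hvz, hzx⟩ :=
    h.dense (max (x - ε) c) x (le_max_right _ _) (max_lt (by linarith) hcx) hx.1.2
  have hbx : b i < x := (hxb i).lt_of_le <| not_lt.1 fun hxb =>
    hx.2 (mem_iUnion.2 ⟨i, haz.trans hzx, hxb⟩)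
  exact ⟨i, (le_max_left _ _).trans_lt (hvz.trans hzb), hbx⟩

theorem perfect (h : IsGapFamily c d a b) (hcd : c < d) : Perfect (gapComplement c d a b) := by
  refine ⟨isClosed_gapComplement c d a b, fun x hx => ?_⟩
  rw [accPt_iff_nhds]
  intro U hU
  obtain ⟨ε, hε, hball⟩ := Metric.mem_nhds_iff.1 hU
  rw [Real.ball_eq_Ioo] at hball
  by_cases hright : x < d ∧ ∀ i, a i ≠ x
  · obtain ⟨i, hi⟩ := h.exists_left_mem_Ioo hx hright.1 hright.2 hε
    exact ⟨a i, ⟨hball ⟨by linarith [hi.1], hi.2⟩, h.left_mem i⟩, hi.1.ne'⟩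
  have hleft : c < x ∧ ∀ i, b i ≠ x := by
    simp only [not_and_or, not_lt, not_forall, not_not] at hright
    rcases hright with hdx | ⟨i, rfl⟩
    · have hxd : x = d := le_antisymm hx.1.2 hdx
      exact ⟨hxd ▸ hcd, fun i => (hxd ▸ h.right_lt_upper i).ne⟩
    · exact ⟨h.lower_lt_left i, fun j => h.right_ne_left j i⟩
  obtain ⟨i, hi⟩ := h.exists_right_mem_Ioo hx hleft.1 hleft.2 hε
  exact ⟨b i, ⟨hball ⟨hi.1, by linarith [hi.2]⟩, h.right_mem i⟩, hi.2.ne⟩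

end IsGapFamily

end GapFamily

theorem exists_mem_Icc_le_and_le {f g : ℝ → ℝ} {a b z : ℝ} (hab : a ≤ b)
    (hgf : ∀ t, g t ≤ f t) (hf : ∀ t, ContinuousWithinAt f (Ici t) t)
    (hg : ∀ t, ContinuousWithinAt g (Iic t) t) (hga : g a ≤ z) (hfb : z ≤ f b) :
    ∃ t ∈ Icc a b, g t ≤ z ∧ z ≤ f t := by
  set T := {t ∈ Icc a b | z ≤ f t}
  have hbT : b ∈ T := ⟨⟨hab, le_rfl⟩, hfb⟩
  have hTa : BddBelow T := ⟨a, fun t ht => ht.1.1⟩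
  have hat₀ : a ≤ sInf T := le_csInf ⟨b, hbT⟩ fun t ht => ht.1.1
  refine ⟨sInf T, ⟨hat₀, csInf_le hTa hbT⟩, ?_, ?_⟩
  · rcases hat₀.eq_or_lt with ha | ha
    · exact ha ▸ hga
    by_contra! hz
    have hnear : ∀ᶠ t in 𝓝[<] sInf T, z < g t :=
      nhdsWithin_mono _ Iio_subset_Iic_self ((hg _).eventually (lt_mem_nhds hz))
    obtain ⟨t, hzt, hat, hts⟩ := (hnear.and (Ioo_mem_nhdsLT ha)).exists
    have htT : t ∈ T := ⟨⟨hat.le, hts.le.trans (csInf_le hTa hbT)⟩, hzt.le.trans (hgf t)⟩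
    exact (csInf_le hTa htT).not_gt hts
  · by_contra! hz
    obtain ⟨u, hu, hsub⟩ :=
      mem_nhdsGE_iff_exists_Ico_subset.1 ((hf _).eventually (gt_mem_nhds hz))
    obtain ⟨t, htT, htu⟩ := exists_lt_of_csInf_lt ⟨b, hbT⟩ hu
    exact (hsub ⟨csInf_le hTa htT, htu⟩ : f t < z).not_ge htT.2

theorem continuousWithinAt_tsum {ι α F : Type*} [TopologicalSpace α] [NormedAddCommGroup F]
    [CompleteSpace F] {f : ι → α → F} {u : ι → ℝ} {s : Set α} {x : α}
    (hx : x ∈ s) (hf : ∀ i, ContinuousWithinAt (f i) s x) (hu : Summable u)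
    (hfu : ∀ i y, ‖f i y‖ ≤ u i) : ContinuousWithinAt (fun y => ∑' i, f i y) s x := by
  refine continuousWithinAt_of_locally_uniform_approx_of_continuousWithinAt hx fun v hv => ?_
  obtain ⟨t, ht⟩ := (tendstoUniformly_tsum hu hfu v hv).exists
  exact ⟨univ, univ_mem, _, tendsto_finsetSum t fun i _ => hf i, fun y _ => ht y⟩

section AtomicMass

variable {ι : Type*} {e l : ι → ℝ} {A B : Set ℝ}

/-- The mass of `A` under the atomic measure `∑ i, l i • δ (e i)`. -/
noncomputable def atomicMass (e l : ι → ℝ) (A : Set ℝ) : ℝ := ∑' i, (e ⁻¹' A).indicator l i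

theorem atomicMass_congr (h : e ⁻¹' A = e ⁻¹' B) : atomicMass e l A = atomicMass e l B := by
  rw [atomicMass, h, atomicMass]

theorem atomicMass_empty : atomicMass e l ∅ = 0 := by simp [atomicMass]

theorem atomicMass_univ : atomicMass e l univ = ∑' i, l i := by simp [atomicMass]

theorem atomicMass_mono (hls : Summable l) (hl : ∀ i, 0 ≤ l i) (h : A ⊆ B) :
    atomicMass e l A ≤ atomicMass e l B :=
  Summable.tsum_le_tsum (fun i => indicator_le_indicator_of_subset (preimage_mono h) hl i)
    (hls.indicator _) (hls.indicator _)

theorem atomicMass_union (hls : Summable l) (h : Disjoint A B) :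
    atomicMass e l (A ∪ B) = atomicMass e l A + atomicMass e l B := by
  rw [atomicMass, preimage_union, indicator_union_of_disjoint (h.preimage e)]
  exact (hls.indicator _).tsum_add (hls.indicator _)

theorem atomicMass_singleton (he : Injective e) (n : ι) : atomicMass e l {e n} = l n := by
  classical
  have : e ⁻¹' {e n} = {n} := by ext i; simp [he.eq_iff]
  rw [atomicMass, this, indicator_singleton, tsum_pi_single]

theorem atomicMass_comp_equiv {κ : Type*} (σ : κ ≃ ι) :
    atomicMass (e ∘ σ) (l ∘ σ) A = atomicMass e l A := by
  rw [atomicMass, atomicMass, ← σ.tsum_eq]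
  rfl

theorem continuousWithinAt_atomicMass_Iic (hls : Summable l) (t : ℝ) :
    ContinuousWithinAt (fun y => atomicMass e l (Iic y)) (Ici t) t := by
  refine continuousWithinAt_tsum self_mem_Ici (fun i => ?_) hls.abs
    fun i y => norm_indicator_le_norm_self l i
  refine tendsto_const_nhds.congr' ?_
  by_cases hi : e i ≤ t
  · filter_upwards [self_mem_nhdsWithin] with y hy
    simp [indicator, hi, hi.trans hy]
  · filter_upwards [nhdsWithin_le_nhds (Iio_mem_nhds (not_le.1 hi))] with y hy
    simp [indicator, hi, not_le.2 (show y < e i from hy)]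

theorem continuousWithinAt_atomicMass_Iio (hls : Summable l) (t : ℝ) :
    ContinuousWithinAt (fun y => atomicMass e l (Iio y)) (Iic t) t := by
  refine continuousWithinAt_tsum self_mem_Iic (fun i => ?_) hls.abs
    fun i y => norm_indicator_le_norm_self l i
  refine tendsto_const_nhds.congr' ?_
  by_cases hi : e i < t
  · filter_upwards [nhdsWithin_le_nhds (Ioi_mem_nhds hi)] with y hy
    simp [indicator, hi, show e i < y from hy]
  · filter_upwards [self_mem_nhdsWithin] with y hy
    simp [indicator, hi, not_lt.2 ((show y ≤ t from hy).trans (not_lt.1 hi))]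

end AtomicMass

section Staircase

variable {ι : Type*} {e l : ι → ℝ} {c s : ℝ}

noncomputable def stair (c s : ℝ) (e l : ι → ℝ) (t : ℝ) : ℝ := c + s * t + atomicMass e l (Iic t)

/-- The left limit of `stair` at `t`. -/
noncomputable def stairLeft (c s : ℝ) (e l : ι → ℝ) (t : ℝ) : ℝ :=
  c + s * t + atomicMass e l (Iio t)

theorem stairLeft_le_stair (hls : Summable l) (hl : ∀ i, 0 ≤ l i) (t : ℝ) :
    stairLeft c s e l t ≤ stair c s e l t := by
  have := atomicMass_mono (e := e) hls hl (Iio_subset_Iic_self (a := t))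
  unfold stair stairLeft; linarith

theorem stair_add_le_stairLeft (hls : Summable l) (hl : ∀ i, 0 ≤ l i) {u t : ℝ} (hut : u < t) :
    stair c s e l u + s * (t - u) ≤ stairLeft c s e l t := by
  have := atomicMass_mono (e := e) hls hl (Iic_subset_Iio.2 hut)
  unfold stair stairLeft; linarith

theorem stair_lt_stairLeft (hls : Summable l) (hl : ∀ i, 0 ≤ l i) (hs : 0 < s) {u t : ℝ}
    (hut : u < t) : stair c s e l u < stairLeft c s e l t := by
  have := stair_add_le_stairLeft (c := c) (s := s) (e := e) hls hl hut
  have := mul_pos hs (sub_pos.2 hut)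
  linarith

theorem stair_mono (hls : Summable l) (hl : ∀ i, 0 ≤ l i) (hs : 0 ≤ s) :
    Monotone (stair c s e l) := fun u t hut => by
  have := atomicMass_mono (e := e) hls hl (Iic_subset_Iic.2 hut)
  have := mul_le_mul_of_nonneg_left hut hs
  unfold stair; linarith

theorem stair_sub_stairLeft (hls : Summable l) (he : Injective e) (n : ι) :
    stair c s e l (e n) - stairLeft c s e l (e n) = l n := by
  rw [stair, stairLeft, ← Iio_union_right,
    atomicMass_union (A := Iio (e n)) hls (by simp), atomicMass_singleton he]
  ring

theorem stair_eq_stairLeft {t : ℝ} (ht : ∀ i, e i ≠ t) : stair c s e l t = stairLeft c s e l t := by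
  rw [stair, stairLeft, atomicMass_congr]
  ext i
  simp [le_iff_lt_or_eq, ht i]

theorem stairLeft_zero (he : ∀ i, 0 < e i) : stairLeft c s e l 0 = c := by
  rw [stairLeft, atomicMass_congr (B := ∅) (by ext i; simp [(he i).not_gt]), atomicMass_empty]
  ring

theorem stair_one (he : ∀ i, e i ≤ 1) : stair c s e l 1 = c + s + ∑' i, l i := by
  rw [stair, atomicMass_congr (B := univ) (by ext i; simp [he i]), atomicMass_univ]
  ring

theorem continuousWithinAt_stair (hls : Summable l) (t : ℝ) :
    ContinuousWithinAt (stair c s e l) (Ici t) t :=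
  ((continuous_const.add (continuous_const.mul continuous_id)).continuousWithinAt).add
    (continuousWithinAt_atomicMass_Iic hls t)

theorem continuousWithinAt_stairLeft (hls : Summable l) (t : ℝ) :
    ContinuousWithinAt (stairLeft c s e l) (Iic t) t :=
  ((continuous_const.add (continuous_const.mul continuous_id)).continuousWithinAt).add
    (continuousWithinAt_atomicMass_Iio hls t)

end Staircase

theorem nonempty_Ioo_inter_Ioo_of_mem {p q x y z : ℝ} (hpq : p < q) (hz : z ∈ Icc p q)
    (hxy : z ∈ Ioo x y) : (Ioo p q ∩ Ioo x y).Nonempty := by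
  rw [Ioo_inter_Ioo, nonempty_Ioo, max_lt_iff, lt_min_iff, lt_min_iff]
  exact ⟨⟨hpq, hz.1.trans_lt hxy.2⟩, hxy.1.trans_le hz.2, hxy.1.trans hxy.2⟩

section StaircaseGaps

variable {ι : Type*} {e l : ι → ℝ} {c s : ℝ}

theorem exists_mem_gap_or_eq_stair (hls : Summable l) (hl : ∀ i, 0 ≤ l i)
    (he : ∀ i, e i ∈ Ioo 0 1) {z : ℝ} (hcz : c ≤ z) (hz : z ≤ c + s + ∑' i, l i) :
    (∃ i, z ∈ Icc (stairLeft c s e l (e i)) (stair c s e l (e i))) ∨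
      ∃ t ∈ Icc (0 : ℝ) 1, stair c s e l t = z := by
  obtain ⟨t, ht, hlz, hzs⟩ := exists_mem_Icc_le_and_le (f := stair c s e l)
    (g := stairLeft c s e l) (z := z) zero_le_one
    (stairLeft_le_stair hls hl)
    (continuousWithinAt_stair hls) (continuousWithinAt_stairLeft hls)
    (by rwa [stairLeft_zero fun i => (he i).1]) (by rwa [stair_one fun i => (he i).2.le])
  by_cases hte : ∃ i, e i = t
  · obtain ⟨i, rfl⟩ := hte
    exact Or.inl ⟨i, hlz, hzs⟩
  · push Not at hte
    exact Or.inr ⟨t, ht, le_antisymm (stair_eq_stairLeft hte ▸ hlz) hzs⟩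

theorem stairLeft_lt_stair (hls : Summable l) (hl : ∀ i, 0 < l i) (he : Injective e) (i : ι) :
    stairLeft c s e l (e i) < stair c s e l (e i) := by
  linarith [stair_sub_stairLeft (c := c) (s := s) hls he i, hl i]

theorem exists_stair_gap_inter_Ioo_nonempty (hls : Summable l) (hl : ∀ i, 0 < l i) (hs : 0 < s)
    (he : Injective e) (he01 : ∀ i, e i ∈ Ioo 0 1)
    (hdense : ∀ u t, 0 ≤ u → u < t → t ≤ 1 → ∃ i, e i ∈ Ioo u t) {x y : ℝ} (hx : c ≤ x)
    (hxy : x < y) (hy : y ≤ c + s + ∑' i, l i) :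
    ∃ i, (Ioo (stairLeft c s e l (e i)) (stair c s e l (e i)) ∩ Ioo x y).Nonempty := by
  have hl0 i := (hl i).le
  have hgap := stairLeft_lt_stair (c := c) (s := s) hls hl he
  have hmem_gap {i z} (hz : z ∈ Icc (stairLeft c s e l (e i)) (stair c s e l (e i)))
      (hxyz : z ∈ Ioo x y) : ∃ j, (Ioo (stairLeft c s e l (e j)) (stair c s e l (e j)) ∩
        Ioo x y).Nonempty := ⟨i, nonempty_Ioo_inter_Ioo_of_mem (hgap i) hz hxyz⟩
  rcases exists_mem_gap_or_eq_stair (c := c) (s := s) hls hl0 he01 (z := (2 * x + y) / 3)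
    (by linarith) (by linarith) with ⟨i, hi⟩ | ⟨t₁, ht₁, h₁⟩
  · exact hmem_gap hi ⟨by linarith, by linarith⟩
  rcases exists_mem_gap_or_eq_stair (c := c) (s := s) hls hl0 he01 (z := (x + 2 * y) / 3)
    (by linarith) (by linarith) with ⟨i, hi⟩ | ⟨t₂, ht₂, h₂⟩
  · exact hmem_gap hi ⟨by linarith, by linarith⟩
  have ht : t₁ < t₂ := (stair_mono (c := c) (e := e) hls hl0 hs.le).reflect_lt (by linarith)
  obtain ⟨i, hi₁, hi₂⟩ := hdense t₁ t₂ ht₁.1 ht ht₂.2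
  have hleft := stair_lt_stairLeft (c := c) (e := e) hls hl0 hs hi₁
  have hright := stair_mono (c := c) (e := e) hls hl0 hs.le hi₂.le
  refine hmem_gap (i := i) (z := (stairLeft c s e l (e i) + stair c s e l (e i)) / 2)
    ⟨by linarith [hgap i], by linarith [hgap i]⟩ ⟨?_, ?_⟩ <;> linarith [hgap i]

theorem isGapFamily_stair (hls : Summable l) (hl : ∀ i, 0 < l i) (hs : 0 < s)
    (he : Injective e) (he01 : ∀ i, e i ∈ Ioo 0 1)
    (hdense : ∀ u t, 0 ≤ u → u < t → t ≤ 1 → ∃ i, e i ∈ Ioo u t) :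
    IsGapFamily c (c + s + ∑' i, l i) (fun i => stairLeft c s e l (e i))
      (fun i => stair c s e l (e i)) := by
  have hl0 i := (hl i).le
  refine ⟨fun i => ?_, stairLeft_lt_stair hls hl he, fun i => ?_, fun i j hij => ?_,
    fun x y => exists_stair_gap_inter_Ioo_nonempty hls hl hs he he01 hdense⟩
  · calc c = stairLeft c s e l 0 := (stairLeft_zero fun i => (he01 i).1).symm
      _ ≤ stair c s e l 0 := stairLeft_le_stair hls hl0 0
      _ < stairLeft c s e l (e i) := stair_lt_stairLeft hls hl0 hs (he01 i).1
  · calc stair c s e l (e i) < stairLeft c s e l 1 := stair_lt_stairLeft hls hl0 hs (he01 i).2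
      _ ≤ stair c s e l 1 := stairLeft_le_stair hls hl0 1
      _ = c + s + ∑' i, l i := stair_one fun i => (he01 i).2.le
  · exact (he.ne hij).lt_or_gt.imp (stair_lt_stairLeft hls hl0 hs) (stair_lt_stairLeft hls hl0 hs)

theorem mul_abs_sub_le_abs_of_mem_gap (hls : Summable l) (hl : ∀ i, 0 ≤ l i) {m : ℝ}
    (hm : stair c s e l m = 0) (hme : ∀ i, e i ≠ m) (i : ι) {p : ℝ}
    (hp : p ∈ Icc (stairLeft c s e l (e i)) (stair c s e l (e i))) : s * |e i - m| ≤ |p| := by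
  rcases (hme i).lt_or_gt with h | h
  · have := stair_add_le_stairLeft (c := c) (s := s) (e := e) hls hl h
    rw [← stair_eq_stairLeft hme, hm] at this
    rw [abs_of_neg (sub_neg.2 h)]
    linarith [hp.2, neg_le_abs p]
  · have := stair_add_le_stairLeft (c := c) (s := s) (e := e) hls hl h
    rw [hm] at this
    rw [abs_of_pos (sub_pos.2 h)]
    linarith [hp.1, le_abs_self p]

theorem zero_notMem_gap (hls : Summable l) (hl : ∀ i, 0 ≤ l i) (hs : 0 < s) {m : ℝ}
    (hm : stair c s e l m = 0) (hme : ∀ i, e i ≠ m) (i : ι) :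
    0 ∉ Ioo (stairLeft c s e l (e i)) (stair c s e l (e i)) := fun h0 => by
  have := mul_abs_sub_le_abs_of_mem_gap hls hl hm hme i (Ioo_subset_Icc_self h0)
  rw [abs_zero] at this
  exact (mul_pos hs (abs_pos.2 (sub_ne_zero.2 (hme i)))).not_ge this

theorem stair_sub_stairLeft_le_sq_dist (hls : Summable l) (hl : ∀ i, 0 ≤ l i) (he : Injective e)
    (hs : 1 ≤ s) {m : ℝ} (hm : stair c s e l m = 0) (hme : ∀ i, e i ≠ m)
    (hlm : ∀ i, l i ≤ (e i - m) ^ 2) (i : ι) :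
    stair c s e l (e i) - stairLeft c s e l (e i) ≤
      dist 0 ((stairLeft c s e l (e i) + stair c s e l (e i)) / 2) ^ 2 := by
  have hab := stairLeft_le_stair (c := c) (s := s) (e := e) hls hl (e i)
  have hmid := mul_abs_sub_le_abs_of_mem_gap hls hl hm hme i
    (p := (stairLeft c s e l (e i) + stair c s e l (e i)) / 2) ⟨by linarith, by linarith⟩
  rw [stair_sub_stairLeft hls he, dist_zero_left, Real.norm_eq_abs]
  calc l i ≤ |e i - m| ^ 2 := by rw [sq_abs]; exact hlm i
    _ ≤ _ := pow_le_pow_left₀ (abs_nonneg _)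
      ((le_mul_of_one_le_left (abs_nonneg _) hs).trans hmid) 2

end StaircaseGaps

section Construction

noncomputable def halfRat : ℕ ≃ Ioo (0 : ℚ) (1 / 2) :=
  have := Set.Ioo.infinite (show (0 : ℚ) < 1 / 2 by norm_num)
  nonempty_equiv_of_countable.some

theorem halfRat_mem (k : ℕ) : ((halfRat k : ℚ) : ℝ) ∈ Ioo 0 (1 / 2) := by
  obtain ⟨h0, h1⟩ := (halfRat k).2
  exact ⟨by exact_mod_cast h0, by simpa using (Rat.cast_lt (K := ℝ)).2 h1⟩

theorem exists_halfRat_mem_Ioo {u t : ℝ} (hu : 0 ≤ u) (hut : u < t) (ht : t ≤ 1 / 2) :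
    ∃ k, ((halfRat k : ℚ) : ℝ) ∈ Ioo u t := by
  obtain ⟨q, huq, hqt⟩ := exists_rat_btwn hut
  have hq : q ∈ Ioo (0 : ℚ) (1 / 2) :=
    ⟨by exact_mod_cast hu.trans_lt huq, by rw [← Rat.cast_lt (K := ℝ)]; simpa using hqt.trans_le ht⟩
  exact ⟨halfRat.symm ⟨q, hq⟩, by simpa using ⟨huq, hqt⟩⟩

noncomputable def gapParam : Bool × ℕ → ℝ
  | (false, k) => (halfRat k : ℚ)
  | (true, k) => 1 - (halfRat k : ℚ)

noncomputable def gapLength (p : Bool × ℕ) : ℝ := (((halfRat p.2 : ℚ) : ℝ) - 1 / 2) ^ 2 / 2 ^ p.2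

noncomputable def gapSlope : ℝ := 2 - ∑' p, gapLength p

theorem gapParam_mem_Ioo : ∀ p, gapParam p ∈ Ioo 0 1
  | (false, k) => ⟨(halfRat_mem k).1, by simp only [gapParam]; linarith [(halfRat_mem k).2]⟩
  | (true, k) => ⟨by simp only [gapParam]; linarith [(halfRat_mem k).2],
      by simp only [gapParam]; linarith [(halfRat_mem k).1]⟩

theorem gapParam_ne_half : ∀ p, gapParam p ≠ 1 / 2
  | (false, k) => (halfRat_mem k).2.ne
  | (true, k) => by simp only [gapParam]; intro h; linarith [(halfRat_mem k).2]

theorem gapParam_injective : Injective gapParam := by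
  rintro ⟨_ | _, j⟩ ⟨_ | _, k⟩ h <;> simp only [gapParam] at h
  · exact congrArg _ (halfRat.injective (Subtype.ext (by exact_mod_cast h)))
  · linarith [(halfRat_mem j).2, (halfRat_mem k).2]
  · linarith [(halfRat_mem j).2, (halfRat_mem k).2]
  · exact congrArg _ (halfRat.injective (Subtype.ext (by exact_mod_cast sub_right_injective h)))

theorem exists_gapParam_mem_Ioo {u t : ℝ} (hu : 0 ≤ u) (hut : u < t) (ht : t ≤ 1) :
    ∃ p, gapParam p ∈ Ioo u t := by
  rcases lt_or_ge u (1 / 2) with hu2 | hu2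
  · obtain ⟨k, hk⟩ := exists_halfRat_mem_Ioo hu (lt_min hut hu2) (min_le_right t _)
    exact ⟨(false, k), hk.1, hk.2.trans_le (min_le_left _ _)⟩
  · obtain ⟨k, hk⟩ := exists_halfRat_mem_Ioo (by linarith) (by linarith : 1 - t < 1 - u)
      (by linarith)
    refine ⟨(true, k), ?_, ?_⟩ <;> simp only [gapParam] <;> linarith [hk.1, hk.2]

theorem gapParam_boolNot (p : Bool × ℕ) :
    gapParam (Equiv.prodCongr Equiv.boolNot (Equiv.refl ℕ) p) = 1 - gapParam p := by
  obtain ⟨_ | _, k⟩ := p <;> simp [gapParam, Equiv.boolNot]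

theorem gapLength_pos (p : Bool × ℕ) : 0 < gapLength p := by
  have hk := halfRat_mem p.2
  have : ((halfRat p.2 : ℚ) : ℝ) - 1 / 2 ≠ 0 := by linarith [hk.2]
  unfold gapLength; positivity

theorem gapLength_le_sq (p : Bool × ℕ) : gapLength p ≤ (gapParam p - 1 / 2) ^ 2 := by
  have hsq : (gapParam p - 1 / 2) ^ 2 = (((halfRat p.2 : ℚ) : ℝ) - 1 / 2) ^ 2 := by
    obtain ⟨_ | _, k⟩ := p
    · rfl
    · simp only [gapParam]; ring
  rw [hsq, gapLength]
  exact div_le_self (sq_nonneg _) (one_le_pow₀ one_le_two)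

-- The bound is written in the shape of `tsum_geometric_two'`.
theorem gapLength_le (p : Bool × ℕ) : gapLength p ≤ 1 / 2 / 2 / 2 ^ p.2 := by
  have := halfRat_mem p.2
  unfold gapLength
  gcongr
  nlinarith [this.1, this.2]

theorem summable_gapLength : Summable gapLength := by
  refine (summable_prod_of_nonneg fun p => (gapLength_pos p).le).2
    ⟨fun b => ?_, Summable.of_finite⟩
  exact Summable.of_nonneg_of_le (fun k => (gapLength_pos _).le) (fun k => gapLength_le (b, k))
    (hasSum_geometric_two' _).summable

theorem tsum_gapLength_le : ∑' p, gapLength p ≤ 1 := by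
  have hfiber (b : Bool) : ∑' k, gapLength (b, k) ≤ 1 / 2 := by
    rw [← tsum_geometric_two' (1 / 2)]
    exact Summable.tsum_le_tsum (fun k => gapLength_le (b, k))
      (summable_gapLength.comp_injective (Prod.mk_right_injective b))
      (hasSum_geometric_two' _).summable
  rw [summable_gapLength.tsum_prod' fun b =>
    summable_gapLength.comp_injective (Prod.mk_right_injective b), tsum_bool]
  linarith [hfiber false, hfiber true]

theorem one_le_gapSlope : 1 ≤ gapSlope := by
  unfold gapSlope; linarith [tsum_gapLength_le]

theorem atomicMass_gapParam_Iio_half :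
    atomicMass gapParam gapLength (Iio (1 / 2)) = (∑' p, gapLength p) / 2 := by
  have hreflect : atomicMass gapParam gapLength (Ioi (1 / 2)) =
      atomicMass gapParam gapLength (Iio (1 / 2)) := by
    have hpre : (gapParam ∘ Equiv.prodCongr Equiv.boolNot (Equiv.refl ℕ)) ⁻¹' Ioi (1 / 2) =
        gapParam ⁻¹' Iio (1 / 2) := by
      ext p
      simp only [mem_preimage, comp_apply, gapParam_boolNot, mem_Ioi, mem_Iio]
      constructor <;> intro <;> linarith
    rw [← atomicMass_comp_equiv (Equiv.prodCongr Equiv.boolNot (Equiv.refl ℕ)), atomicMass, hpre]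
    rfl
  have hunion := atomicMass_union (e := gapParam) summable_gapLength
    (Iio_disjoint_Ioi_same (a := (1 / 2 : ℝ)))
  rw [atomicMass_congr (B := univ) (by ext p; simpa using gapParam_ne_half p), atomicMass_univ,
    hreflect] at hunion
  linarith

theorem stair_gapParam_half :
    stair (-1) gapSlope gapParam gapLength (1 / 2) = 0 := by
  rw [stair_eq_stairLeft gapParam_ne_half, stairLeft, atomicMass_gapParam_Iio_half, gapSlope]
  ring

theorem isGapFamily_gapParam : IsGapFamily (-1) 1
    (fun p => stairLeft (-1) gapSlope gapParam gapLength (gapParam p))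
    (fun p => stair (-1) gapSlope gapParam gapLength (gapParam p)) := by
  have h := isGapFamily_stair (c := -1) summable_gapLength gapLength_pos
    (one_pos.trans_le one_le_gapSlope) gapParam_injective gapParam_mem_Ioo
    fun _ _ => exists_gapParam_mem_Ioo
  rwa [gapSlope, show -1 + (2 - ∑' p, gapLength p) + ∑' p, gapLength p = 1 by ring] at h

end Construction

/-- There exists a Cantor set `Q ⊆ [-1,1]` containing `0`, obtained by
removing countably many disjoint open intervals `I_k = (a_k, b_k)`, such that each
gap has length at most the square of its distance from `0`:
`|I_k| ≤ (d(0, x_k))²` where `x_k` is the midpoint of `I_k`. -/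
theorem stmt13 : ∃ (Q : Set ℝ) (a b : ℕ → ℝ),
    Q ⊆ Set.Icc (-1 : ℝ) 1 ∧ (0 : ℝ) ∈ Q ∧
    IsCompact Q ∧ Perfect Q ∧ IsTotallyDisconnected Q ∧
    (∀ k, a k < b k) ∧
    (Pairwise fun i j => Disjoint (Set.Ioo (a i) (b i)) (Set.Ioo (a j) (b j))) ∧
    Q = Set.Icc (-1 : ℝ) 1 \ ⋃ k, Set.Ioo (a k) (b k) ∧
    (∀ k, b k - a k ≤ (dist (0 : ℝ) ((a k + b k) / 2)) ^ 2) := by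
  set a := fun p => stairLeft (-1) gapSlope gapParam gapLength (gapParam p)
  set b := fun p => stair (-1) gapSlope gapParam gapLength (gapParam p)
  set σ := Equiv.boolProdNatEquivNat.symm
  have hQ := isGapFamily_gapParam
  have hl p := (gapLength_pos p).le
  refine ⟨gapComplement (-1) 1 a b, a ∘ σ, b ∘ σ, sdiff_subset, ⟨by norm_num, ?_⟩,
    isCompact_gapComplement _ _ a b, hQ.perfect (by norm_num), hQ.isTotallyDisconnected,
    fun k => hQ.left_lt_right (σ k), hQ.pairwise_disjoint.comp_of_injective σ.injective, ?_,
    fun k => stair_sub_stairLeft_le_sq_dist summable_gapLength hl gapParam_injective one_le_gapSlope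
      stair_gapParam_half gapParam_ne_half gapLength_le_sq (σ k)⟩
  · simpa using fun p => zero_notMem_gap summable_gapLength hl (one_pos.trans_le one_le_gapSlope)
      stair_gapParam_half gapParam_ne_half p
  · rw [gapComplement, ← σ.surjective.iUnion_comp]
    rfl
end
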